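/- arXiv:2207.00914 — 2 statements merged into one kernel-verified Lean document; each statement's English description precedes it below -/
import Mathlib

section
/- Let τ > 0 and let ρ_τ be the approximation function. Then for every s ∈ ℝ the chain of inequalities 0 ≤ ρ_τ(s) - 3τ/8 ≤ ρ_τ'(s)·s ≤ ρ_τ(s) ≤ |s| + 3τ/8 holds. -/
/-- The approximation function `ρ_τ`. -/
noncomputable def rho (τ s : ℝ) : ℝ :=
  if τ ≤ |s| then |s| else -s ^ 4 / (8 * τ ^ 3) + 3 * s ^ 2 / (4 * τ) + 3 * τ / 8

/-! On `[-τ, τ]` the function `ρ_τ` is the even quartic `rhoPoly τ`, which meets `|s|` at `±τ`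
with slope `±1`, so `ρ_τ` is differentiable everywhere. There each of the four differences is a
visibly nonnegative rational function of `s` and `τ`, e.g.
`ρ_τ(s) - ρ_τ'(s) s = 3 (τ² - s²)² / (8 τ³)`; outside `[-τ, τ]`, `ρ_τ(s) = |s| = ρ_τ'(s) s`. -/

open Set Topology

noncomputable def rhoPoly (τ s : ℝ) : ℝ :=
  -s ^ 4 / (8 * τ ^ 3) + 3 * s ^ 2 / (4 * τ) + 3 * τ / 8

noncomputable def rhoPolyDeriv (τ s : ℝ) : ℝ :=
  -s ^ 3 / (2 * τ ^ 3) + 3 * s / (2 * τ)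

theorem hasDerivAt_rhoPoly (τ s : ℝ) : HasDerivAt (rhoPoly τ) (rhoPolyDeriv τ s) s := by
  have h := (((hasDerivAt_pow 4 s).neg.div_const (8 * τ ^ 3)).add
      (((hasDerivAt_pow 2 s).const_mul 3).div_const (4 * τ))).add_const (3 * τ / 8)
  exact h.congr_deriv (by simp only [rhoPolyDeriv]; ring)

theorem rhoPolyDeriv_self {τ : ℝ} (hτ : τ ≠ 0) : rhoPolyDeriv τ τ = 1 := by
  simp only [rhoPolyDeriv]
  field_simp
  ring

theorem rhoPolyDeriv_neg (τ s : ℝ) : rhoPolyDeriv τ (-s) = -rhoPolyDeriv τ s := by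
  simp only [rhoPolyDeriv]
  ring

theorem rhoPoly_abs (τ s : ℝ) : rhoPoly τ |s| = rhoPoly τ s := by
  simp only [rhoPoly, (by decide : Even 4).pow_abs, even_two.pow_abs]

theorem rho_of_le_abs {τ s : ℝ} (h : τ ≤ |s|) : rho τ s = |s| := if_pos h

theorem rho_of_abs_le {τ s : ℝ} (hτ : 0 < τ) (h : |s| ≤ τ) : rho τ s = rhoPoly τ s := by
  rcases h.lt_or_eq with h | h
  · exact if_neg h.not_ge
  · rw [rho_of_le_abs h.ge, ← rhoPoly_abs, h, rhoPoly]
    field_simp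
    ring

theorem rho_neg (τ s : ℝ) : rho τ (-s) = rho τ s := by
  simp only [rho, abs_neg, (by decide : Even 4).neg_pow, even_two.neg_pow]

theorem HasDerivAt.of_eventuallyEq_Iic_Ici {f g h : ℝ → ℝ} {a d : ℝ} (hg : HasDerivAt g d a)
    (hh : HasDerivAt h d a) (hfg : f =ᶠ[𝓝[≤] a] g) (hfh : f =ᶠ[𝓝[≥] a] h) :
    HasDerivAt f d a := by
  have := (hg.hasDerivWithinAt.congr_of_eventuallyEq_of_mem hfg self_mem_Iic).union
    (hh.hasDerivWithinAt.congr_of_eventuallyEq_of_mem hfh self_mem_Ici)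
  rwa [Iic_union_Ici, hasDerivWithinAt_univ] at this

theorem hasDerivAt_rho_self {τ : ℝ} (hτ : 0 < τ) : HasDerivAt (rho τ) 1 τ := by
  refine (rhoPolyDeriv_self hτ.ne' ▸ hasDerivAt_rhoPoly τ τ).of_eventuallyEq_Iic_Ici
    (hasDerivAt_id τ) ?_ ?_
  · filter_upwards [nhdsWithin_le_nhds (Ioi_mem_nhds (neg_lt_self hτ)), self_mem_nhdsWithin]
      with x hx₁ hx₂
    exact rho_of_abs_le hτ (abs_le.mpr ⟨hx₁.le, hx₂⟩)
  · filter_upwards [self_mem_nhdsWithin] with x hx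
    have hx₀ : 0 ≤ x := hτ.le.trans hx
    rw [rho_of_le_abs (by rwa [abs_of_nonneg hx₀]), abs_of_nonneg hx₀, id]

theorem hasDerivAt_rho_neg_self {τ : ℝ} (hτ : 0 < τ) : HasDerivAt (rho τ) (-1) (-τ) := by
  have h := (hasDerivAt_rho_self hτ).comp_of_eq (-τ) (hasDerivAt_neg (-τ)) (neg_neg τ).symm
  rwa [one_mul, show rho τ ∘ Neg.neg = rho τ from funext (rho_neg τ)] at h

theorem hasDerivAt_rho_of_abs_le {τ s : ℝ} (hτ : 0 < τ) (h : |s| ≤ τ) :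
    HasDerivAt (rho τ) (rhoPolyDeriv τ s) s := by
  rcases h.lt_or_eq with h | h
  · refine (hasDerivAt_rhoPoly τ s).congr_of_eventuallyEq ?_
    filter_upwards [(isOpen_lt continuous_abs continuous_const).mem_nhds h] with x hx
    exact rho_of_abs_le hτ hx.le
  · rcases (abs_eq hτ.le).mp h with rfl | rfl
    · exact rhoPolyDeriv_self hτ.ne' ▸ hasDerivAt_rho_self hτ
    · exact rhoPolyDeriv_neg τ τ ▸ rhoPolyDeriv_self hτ.ne' ▸ hasDerivAt_rho_neg_self hτ

theorem hasDerivAt_rho_of_lt_abs {τ s : ℝ} (hτ : 0 ≤ τ) (h : τ < |s|) :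
    HasDerivAt (rho τ) (SignType.sign s) s := by
  refine (hasDerivAt_abs (abs_pos.mp (hτ.trans_lt h))).congr_of_eventuallyEq ?_
  filter_upwards [(isOpen_lt continuous_const continuous_abs).mem_nhds h] with x hx
  exact rho_of_le_abs hx.le

theorem rhoPoly_chain {τ s : ℝ} (hτ : 0 < τ) (h : |s| ≤ τ) :
    0 ≤ rhoPoly τ s - 3 * τ / 8 ∧
    rhoPoly τ s - 3 * τ / 8 ≤ rhoPolyDeriv τ s * s ∧
    rhoPolyDeriv τ s * s ≤ rhoPoly τ s ∧
    rhoPoly τ s ≤ |s| + 3 * τ / 8 := by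
  have hτ₃ : 0 < 8 * τ ^ 3 := by positivity
  have hs : s ^ 2 ≤ τ ^ 2 := sq_le_sq.mpr (by rwa [abs_of_pos hτ])
  refine ⟨?_, ?_, ?_, ?_⟩
  · have key : rhoPoly τ s - 3 * τ / 8 = s ^ 2 * (6 * τ ^ 2 - s ^ 2) / (8 * τ ^ 3) := by
      simp only [rhoPoly]
      field_simp
      ring
    rw [key]
    exact div_nonneg (mul_nonneg (sq_nonneg s) (by nlinarith)) hτ₃.le
  · have key : rhoPolyDeriv τ s * s - (rhoPoly τ s - 3 * τ / 8)
        = 3 * s ^ 2 * (2 * τ ^ 2 - s ^ 2) / (8 * τ ^ 3) := by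
      simp only [rhoPoly, rhoPolyDeriv]
      field_simp
      ring
    rw [← sub_nonneg, key]
    exact div_nonneg (mul_nonneg (by positivity) (by nlinarith)) hτ₃.le
  · have key : rhoPoly τ s - rhoPolyDeriv τ s * s = 3 * (τ ^ 2 - s ^ 2) ^ 2 / (8 * τ ^ 3) := by
      simp only [rhoPoly, rhoPolyDeriv]
      field_simp
      ring
    rw [← sub_nonneg, key]
    positivity
  · have key : |s| + 3 * τ / 8 - rhoPoly τ |s|
        = |s| * (2 * τ ^ 3 + 6 * τ ^ 2 * (τ - |s|) + |s| ^ 3) / (8 * τ ^ 3) := by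
      simp only [rhoPoly]
      field_simp
      ring
    rw [← sub_nonneg, ← rhoPoly_abs, key]
    have : 0 ≤ τ - |s| := sub_nonneg.mpr h
    positivity

theorem stmt2 (τ : ℝ) (hτ : 0 < τ) (s : ℝ) :
    0 ≤ rho τ s - 3 * τ / 8 ∧
    rho τ s - 3 * τ / 8 ≤ deriv (rho τ) s * s ∧
    deriv (rho τ) s * s ≤ rho τ s ∧
    rho τ s ≤ |s| + 3 * τ / 8 := by
  rcases le_or_gt |s| τ with h | h
  · rw [(hasDerivAt_rho_of_abs_le hτ h).deriv, rho_of_abs_le hτ h]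
    exact rhoPoly_chain hτ h
  · rw [(hasDerivAt_rho_of_lt_abs hτ.le h).deriv, sign_mul_self, rho_of_le_abs h.le]
    exact ⟨by linarith, by linarith, le_rfl, by linarith⟩
end

section
/- Let u be a classical solution of the target system with continuous coefficient λ satisfying λ(x,t) ≥ λ̲ > 0. Then for every τ > 0, every p ∈ [1, ∞) and every t > 0, the function t ↦ ∫₀¹ ρ_τ(u(x,t))^p dx is differentiable and satisfies d/dt ∫₀¹ ρ_τ(u(x,t))^p dx ≤ -λ̲·p·∫₀¹ ρ_τ(u(x,t))^p dx + (3/8)·τ·p·∫₀¹ λ(x,t)·ρ_τ(u(x,t))^{p-1} dx. -/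
/-!
Differentiating under the integral sign and inserting the equation,
`d/dt ∫ ρ(u)^p = ∫ (ρ^p)'(u) u_xx - ∫ λ (ρ^p)'(u) u`.
With the Neumann conditions, integration by parts turns the diffusion term into
`-∫ (ρ^p)''(u) u_x² ≤ 0`, because `ρ_τ` is `C²` and convex, hence so is `ρ_τ^p` for `p ≥ 1`.
In the reaction term `(ρ^p)'(u) u = p ρ(u)^(p-1) · u ρ'(u)` and `s ρ_τ'(s) ≥ ρ_τ(s) - 3τ/8`
pointwise, so `λ ≥ λ̲ > 0` gives the two terms of the bound.
-/

open MeasureTheory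

/-- A classical solution of the target system
`u_t = u_xx - lam·u` on `(0,1)×(0,∞)` with Neumann boundary conditions. -/
structure TargetSol (lam u ut ux uxx : ℝ → ℝ → ℝ) : Prop where
  cont : ContinuousOn (fun q : ℝ × ℝ => u q.1 q.2) (Set.Icc 0 1 ×ˢ Set.Ici 0)
  deriv_t : ∀ x ∈ Set.Icc (0:ℝ) 1, ∀ t ∈ Set.Ioi (0:ℝ), HasDerivAt (fun s => u x s) (ut x t) t
  deriv_x : ∀ x ∈ Set.Icc (0:ℝ) 1, ∀ t ∈ Set.Ioi (0:ℝ), HasDerivAt (fun y => u y t) (ux x t) x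
  deriv_xx : ∀ x ∈ Set.Icc (0:ℝ) 1, ∀ t ∈ Set.Ioi (0:ℝ), HasDerivAt (fun y => ux y t) (uxx x t) x
  cont_ut : ContinuousOn (fun q : ℝ × ℝ => ut q.1 q.2) (Set.Icc 0 1 ×ˢ Set.Ioi 0)
  cont_ux : ContinuousOn (fun q : ℝ × ℝ => ux q.1 q.2) (Set.Icc 0 1 ×ˢ Set.Ioi 0)
  cont_uxx : ContinuousOn (fun q : ℝ × ℝ => uxx q.1 q.2) (Set.Icc 0 1 ×ˢ Set.Ioi 0)
  pde : ∀ x ∈ Set.Ioo (0:ℝ) 1, ∀ t ∈ Set.Ioi (0:ℝ), ut x t = uxx x t - lam x t * u x t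
  bc0 : ∀ t ∈ Set.Ioi (0:ℝ), ux 0 t = 0
  bc1 : ∀ t ∈ Set.Ioi (0:ℝ), ux 1 t = 0

open Set Filter

lemma hasDerivWithinAt_of_eqOn_of_isClosed {f g f' : ℝ → ℝ} {s : Set ℝ} (hs : IsClosed s)
    (hfg : EqOn f g s) (hg : ∀ y ∈ s, HasDerivAt g (f' y) y) (x : ℝ) :
    HasDerivWithinAt f (f' x) s x := by
  by_cases hx : x ∈ s
  · exact (hg x hx).hasDerivWithinAt.congr hfg (hfg hx)
  · -- off the closed set `s`, every derivative within `s` holds vacuously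
    exact HasFDerivWithinAt.of_notMem_closure (hs.closure_eq.symm ▸ hx)

lemma hasDerivAt_of_eqOn_Iic_Icc_Ici {f f' g₁ g₂ g₃ : ℝ → ℝ} {a b : ℝ} (hab : a ≤ b)
    (h₁ : EqOn f g₁ (Iic a)) (h₂ : EqOn f g₂ (Icc a b)) (h₃ : EqOn f g₃ (Ici b))
    (d₁ : ∀ y ∈ Iic a, HasDerivAt g₁ (f' y) y) (d₂ : ∀ y ∈ Icc a b, HasDerivAt g₂ (f' y) y)
    (d₃ : ∀ y ∈ Ici b, HasDerivAt g₃ (f' y) y) (x : ℝ) : HasDerivAt f (f' x) x := by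
  have h := ((hasDerivWithinAt_of_eqOn_of_isClosed isClosed_Iic h₁ d₁ x).union
    (hasDerivWithinAt_of_eqOn_of_isClosed isClosed_Icc h₂ d₂ x)).union
    (hasDerivWithinAt_of_eqOn_of_isClosed isClosed_Ici h₃ d₃ x)
  rwa [Iic_union_Icc_eq_Iic hab, Iic_union_Ici, hasDerivWithinAt_univ] at h

noncomputable def rhoDeriv (τ s : ℝ) : ℝ :=
  if τ ≤ |s| then Real.sign s else s * (3 * τ ^ 2 - s ^ 2) / (2 * τ ^ 3)

noncomputable def rhoDeriv2 (τ s : ℝ) : ℝ := 3 / (2 * τ ^ 3) * max (τ ^ 2 - s ^ 2) 0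

section Rho

variable {τ : ℝ}

lemma rho_of_le (hτ : 0 < τ) {s : ℝ} (hs : τ ≤ s) : rho τ s = s := by
  rw [rho, abs_of_pos (hτ.trans_le hs), if_pos hs]

lemma rho_of_le_neg (hτ : 0 < τ) {s : ℝ} (hs : s ≤ -τ) : rho τ s = -s := by
  rw [rho, abs_of_neg (by linarith), if_pos (by linarith)]

lemma rho_of_mem_Icc (hτ : 0 < τ) {s : ℝ} (hs : s ∈ Icc (-τ) τ) :
    rho τ s = -s ^ 4 / (8 * τ ^ 3) + 3 * s ^ 2 / (4 * τ) + 3 * τ / 8 := by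
  rw [rho]
  split_ifs with h
  · have hs2 : s ^ 2 = τ ^ 2 := by rw [← sq_abs, le_antisymm (abs_le.2 hs) h]
    rw [le_antisymm (abs_le.2 hs) h, show s ^ 4 = (s ^ 2) ^ 2 by ring, hs2]
    field_simp
    ring
  · rfl

lemma rhoDeriv_of_le (hτ : 0 < τ) {s : ℝ} (hs : τ ≤ s) : rhoDeriv τ s = 1 := by
  rw [rhoDeriv, abs_of_pos (hτ.trans_le hs), if_pos hs, Real.sign_of_pos (hτ.trans_le hs)]

lemma rhoDeriv_of_le_neg (hτ : 0 < τ) {s : ℝ} (hs : s ≤ -τ) : rhoDeriv τ s = -1 := by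
  rw [rhoDeriv, abs_of_neg (by linarith), if_pos (by linarith), Real.sign_of_neg (by linarith)]

lemma rhoDeriv_of_mem_Icc (hτ : 0 < τ) {s : ℝ} (hs : s ∈ Icc (-τ) τ) :
    rhoDeriv τ s = s * (3 * τ ^ 2 - s ^ 2) / (2 * τ ^ 3) := by
  rw [rhoDeriv]
  split_ifs with h
  · rcases (abs_eq hτ.le).1 (le_antisymm (abs_le.2 hs) h) with rfl | rfl
    · rw [Real.sign_of_pos hτ]; field_simp; ring
    · rw [Real.sign_of_neg (by linarith)]; field_simp; ring
  · rfl

lemma rhoDeriv2_of_mem_Icc {s : ℝ} (hs : s ∈ Icc (-τ) τ) :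
    rhoDeriv2 τ s = 3 / (2 * τ ^ 3) * (τ ^ 2 - s ^ 2) := by
  rw [rhoDeriv2, max_eq_left (by nlinarith [hs.1, hs.2])]

lemma rhoDeriv2_of_le_abs (hτ : 0 ≤ τ) {s : ℝ} (hs : τ ≤ |s|) : rhoDeriv2 τ s = 0 := by
  rw [rhoDeriv2, max_eq_right (by nlinarith [sq_abs s, abs_nonneg s]), mul_zero]

lemma rhoDeriv2_nonneg (hτ : 0 ≤ τ) (s : ℝ) : 0 ≤ rhoDeriv2 τ s := by
  unfold rhoDeriv2; positivity

lemma continuous_rhoDeriv2 : Continuous (rhoDeriv2 τ) := by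
  unfold rhoDeriv2; fun_prop

lemma hasDerivAt_rho (hτ : 0 < τ) (s : ℝ) : HasDerivAt (rho τ) (rhoDeriv τ s) s := by
  refine hasDerivAt_of_eqOn_Iic_Icc_Ici (neg_le_self hτ.le)
    (fun y hy => rho_of_le_neg hτ hy) (fun y hy => rho_of_mem_Icc hτ hy)
    (fun y hy => rho_of_le hτ hy) (fun y hy => ?_) (fun y hy => ?_) (fun y hy => ?_) s
  · rw [rhoDeriv_of_le_neg hτ hy]; exact hasDerivAt_neg y
  · rw [rhoDeriv_of_mem_Icc hτ hy]
    refine ((((hasDerivAt_pow 4 y).neg.div_const (8 * τ ^ 3)).add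
      (((hasDerivAt_pow 2 y).const_mul 3).div_const (4 * τ))).add_const (3 * τ / 8)).congr_deriv ?_
    push_cast; field_simp; ring
  · rw [rhoDeriv_of_le hτ hy]; exact hasDerivAt_id y

lemma hasDerivAt_rhoDeriv (hτ : 0 < τ) (s : ℝ) : HasDerivAt (rhoDeriv τ) (rhoDeriv2 τ s) s := by
  refine hasDerivAt_of_eqOn_Iic_Icc_Ici (neg_le_self hτ.le)
    (fun y hy => rhoDeriv_of_le_neg hτ hy) (fun y hy => rhoDeriv_of_mem_Icc hτ hy)
    (fun y hy => rhoDeriv_of_le hτ hy) (fun y hy => ?_) (fun y hy => ?_) (fun y hy => ?_) s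
  · rw [rhoDeriv2_of_le_abs hτ.le (le_neg.1 hy |>.trans (neg_le_abs y))]
    exact hasDerivAt_const y _
  · rw [rhoDeriv2_of_mem_Icc hy]
    refine (((hasDerivAt_id' y).mul ((hasDerivAt_pow 2 y).const_sub (3 * τ ^ 2))).div_const
      (2 * τ ^ 3)).congr_deriv ?_
    push_cast; field_simp; ring
  · rw [rhoDeriv2_of_le_abs hτ.le (hy.trans (le_abs_self y))]
    exact hasDerivAt_const y _

lemma continuous_rho (hτ : 0 < τ) : Continuous (rho τ) :=
  continuous_iff_continuousAt.2 fun s => (hasDerivAt_rho hτ s).continuousAt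

lemma continuous_rhoDeriv (hτ : 0 < τ) : Continuous (rhoDeriv τ) :=
  continuous_iff_continuousAt.2 fun s => (hasDerivAt_rhoDeriv hτ s).continuousAt

lemma le_neg_or_mem_Icc_or_le (τ s : ℝ) : s ≤ -τ ∨ s ∈ Icc (-τ) τ ∨ τ ≤ s := by
  by_cases h₁ : s ≤ -τ
  · exact Or.inl h₁
  by_cases h₂ : τ ≤ s
  · exact Or.inr (Or.inr h₂)
  exact Or.inr (Or.inl ⟨by linarith, by linarith⟩)

lemma three_eighths_le_rho (hτ : 0 < τ) (s : ℝ) : 3 * τ / 8 ≤ rho τ s := by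
  rcases le_neg_or_mem_Icc_or_le τ s with h | h | h
  · rw [rho_of_le_neg hτ h]; linarith
  · rw [rho_of_mem_Icc hτ h]
    have : 0 ≤ s ^ 2 * (6 * τ ^ 2 - s ^ 2) / (8 * τ ^ 3) :=
      div_nonneg (mul_nonneg (sq_nonneg s) (by nlinarith [h.1, h.2])) (by positivity)
    have key : -s ^ 4 / (8 * τ ^ 3) + 3 * s ^ 2 / (4 * τ) + 3 * τ / 8
        = 3 * τ / 8 + s ^ 2 * (6 * τ ^ 2 - s ^ 2) / (8 * τ ^ 3) := by field_simp; ring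
    linarith
  · rw [rho_of_le hτ h]; linarith

lemma rho_pos (hτ : 0 < τ) (s : ℝ) : 0 < rho τ s :=
  lt_of_lt_of_le (by linarith) (three_eighths_le_rho hτ s)

lemma rho_sub_le_mul_rhoDeriv (hτ : 0 < τ) (s : ℝ) : rho τ s - 3 * τ / 8 ≤ s * rhoDeriv τ s := by
  rcases le_neg_or_mem_Icc_or_le τ s with h | h | h
  · rw [rho_of_le_neg hτ h, rhoDeriv_of_le_neg hτ h]; linarith
  · rw [rho_of_mem_Icc hτ h, rhoDeriv_of_mem_Icc hτ h]
    have : 0 ≤ s ^ 2 * (6 * τ ^ 2 - 3 * s ^ 2) / (8 * τ ^ 3) :=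
      div_nonneg (mul_nonneg (sq_nonneg s) (by nlinarith [h.1, h.2])) (by positivity)
    have key : s * (s * (3 * τ ^ 2 - s ^ 2) / (2 * τ ^ 3))
        = -s ^ 4 / (8 * τ ^ 3) + 3 * s ^ 2 / (4 * τ) + 3 * τ / 8 - 3 * τ / 8
          + s ^ 2 * (6 * τ ^ 2 - 3 * s ^ 2) / (8 * τ ^ 3) := by field_simp; ring
    linarith
  · rw [rho_of_le hτ h, rhoDeriv_of_le hτ h]; linarith

end Rho

noncomputable def rhoRpowDeriv (τ p s : ℝ) : ℝ := p * rho τ s ^ (p - 1) * rhoDeriv τ s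

noncomputable def rhoRpowDeriv2 (τ p s : ℝ) : ℝ :=
  p * ((p - 1) * rho τ s ^ (p - 2) * rhoDeriv τ s ^ 2 + rho τ s ^ (p - 1) * rhoDeriv2 τ s)

section RhoRpow

variable {τ : ℝ}

lemma continuous_rho_rpow (hτ : 0 < τ) (p : ℝ) : Continuous fun s => rho τ s ^ p :=
  (continuous_rho hτ).rpow_const fun s => Or.inl (rho_pos hτ s).ne'

lemma continuous_rhoRpowDeriv (hτ : 0 < τ) (p : ℝ) : Continuous (rhoRpowDeriv τ p) :=
  (continuous_const.mul (continuous_rho_rpow hτ _)).mul (continuous_rhoDeriv hτ)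

lemma continuous_rhoRpowDeriv2 (hτ : 0 < τ) (p : ℝ) : Continuous (rhoRpowDeriv2 τ p) :=
  continuous_const.mul (((continuous_const.mul (continuous_rho_rpow hτ _)).mul
    ((continuous_rhoDeriv hτ).pow 2)).add ((continuous_rho_rpow hτ _).mul continuous_rhoDeriv2))

lemma hasDerivAt_rho_rpow (hτ : 0 < τ) (p s : ℝ) :
    HasDerivAt (fun y => rho τ y ^ p) (rhoRpowDeriv τ p s) s :=
  ((hasDerivAt_rho hτ s).rpow_const (Or.inl (rho_pos hτ s).ne')).congr_deriv
    (by rw [rhoRpowDeriv]; ring)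

lemma hasDerivAt_rhoRpowDeriv (hτ : 0 < τ) (p s : ℝ) :
    HasDerivAt (rhoRpowDeriv τ p) (rhoRpowDeriv2 τ p s) s := by
  refine (((hasDerivAt_rho_rpow hτ (p - 1) s).const_mul p).mul
    (hasDerivAt_rhoDeriv hτ s)).congr_deriv ?_
  rw [rhoRpowDeriv, rhoRpowDeriv2, show p - 1 - 1 = p - 2 by ring]
  ring

lemma rhoRpowDeriv2_nonneg (hτ : 0 < τ) {p : ℝ} (hp : 1 ≤ p) (s : ℝ) :
    0 ≤ rhoRpowDeriv2 τ p s := by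
  have := rho_pos hτ s
  have := rhoDeriv2_nonneg hτ.le s
  have : 0 ≤ p - 1 := by linarith
  unfold rhoRpowDeriv2
  positivity

lemma neg_mul_rhoRpowDeriv_mul_le (hτ : 0 < τ) {p lamb l : ℝ} (hp : 0 ≤ p)
    (hlamb : 0 ≤ lamb) (hl : lamb ≤ l) (s : ℝ) :
    -(l * (rhoRpowDeriv τ p s * s))
      ≤ -lamb * p * rho τ s ^ p + 3 / 8 * τ * p * (l * rho τ s ^ (p - 1)) := by
  have hρ := rho_pos hτ s
  have hρp : rho τ s ^ p = rho τ s ^ (p - 1) * rho τ s := by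
    rw [← Real.rpow_add_one hρ.ne', sub_add_cancel]
  have hw : 0 ≤ l * p * rho τ s ^ (p - 1) := by
    have := hlamb.trans hl; positivity
  have h₁ := mul_le_mul_of_nonneg_left (rho_sub_le_mul_rhoDeriv hτ s) hw
  have h₂ := mul_le_mul_of_nonneg_right hl
    (by positivity : 0 ≤ p * rho τ s ^ (p - 1) * rho τ s)
  rw [rhoRpowDeriv, hρp]
  nlinarith

end RhoRpow

section IntervalIntegral

open intervalIntegral

variable {a b : ℝ}

lemma hasDerivAt_intervalIntegral_of_continuousOn {F F' : ℝ → ℝ → ℝ} {t : ℝ} {U : Set ℝ}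
    (hab : a ≤ b) (hU : IsOpen U) (ht : t ∈ U)
    (hF : ∀ s ∈ U, ContinuousOn (fun x => F x s) (Icc a b))
    (hF' : ContinuousOn (fun q : ℝ × ℝ => F' q.1 q.2) (Icc a b ×ˢ U))
    (hderiv : ∀ x ∈ Icc a b, ∀ s ∈ U, HasDerivAt (F x) (F' x s) s) :
    HasDerivAt (fun s => ∫ x in a..b, F x s) (∫ x in a..b, F' x t) t := by
  obtain ⟨δ, hδ, hδU⟩ := Metric.nhds_basis_closedBall.mem_iff.1 (hU.mem_nhds ht)
  obtain ⟨C, hC⟩ := (isCompact_Icc.prod (isCompact_closedBall t δ)).exists_bound_of_continuousOn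
    (hF'.mono (prod_mono_right hδU))
  have hIoc : uIoc a b = Ioc a b := uIoc_of_le hab
  have hmeas {f : ℝ → ℝ} (hf : ContinuousOn f (Icc a b)) :
      AEStronglyMeasurable f (volume.restrict (uIoc a b)) := by
    rw [hIoc]
    exact (hf.mono Ioc_subset_Icc_self).aestronglyMeasurable measurableSet_Ioc
  have hball : Metric.ball t δ ⊆ U := Metric.ball_subset_closedBall.trans hδU
  refine (hasDerivAt_integral_of_dominated_loc_of_deriv_le (F := fun s x => F x s)
    (F' := fun s x => F' x s) (bound := fun _ => C) (Metric.ball_mem_nhds t hδ) ?_ ?_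
    (hmeas (hF'.uncurry_right t ht)) ?_ intervalIntegrable_const ?_).2
  · filter_upwards [Metric.ball_mem_nhds t hδ] with s hs using hmeas (hF s (hball hs))
  · exact (hF t ht).intervalIntegrable_of_Icc hab
  · refine Eventually.of_forall fun x hx s hs => hC (x, s) ⟨?_, Metric.ball_subset_closedBall hs⟩
    exact Ioc_subset_Icc_self (hIoc ▸ hx)
  · exact Eventually.of_forall fun x hx s hs =>
      hderiv x (Ioc_subset_Icc_self (hIoc ▸ hx)) s (hball hs)

/-- Integrating by parts moves the derivative onto `g ∘ v`, leaving `-∫ g'(v) v'²`. -/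
lemma integral_comp_mul_deriv2_nonpos {g g' v v' v'' : ℝ → ℝ} (hab : a ≤ b)
    (hg : ∀ y, HasDerivAt g (g' y) y) (hg' : Continuous g') (hg'_nonneg : ∀ y, 0 ≤ g' y)
    (hv : ∀ x ∈ Icc a b, HasDerivAt v (v' x) x) (hv' : ∀ x ∈ Icc a b, HasDerivAt v' (v'' x) x)
    (hv'' : ContinuousOn v'' (Icc a b)) (ha : v' a = 0) (hb : v' b = 0) :
    ∫ x in a..b, g (v x) * v'' x ≤ 0 := by
  have hv_cont : ContinuousOn v (Icc a b) := fun x hx => (hv x hx).continuousAt.continuousWithinAt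
  have hv'_cont : ContinuousOn v' (Icc a b) :=
    fun x hx => (hv' x hx).continuousAt.continuousWithinAt
  rw [← uIcc_of_le hab] at hv hv' hv'' hv_cont hv'_cont
  rw [integral_mul_deriv_eq_deriv_mul (u := fun x => g (v x))
    (fun x hx => (hg (v x)).comp x (hv x hx)) hv'
    ((hg'.comp_continuousOn hv_cont).mul hv'_cont).intervalIntegrable hv''.intervalIntegrable,
    ha, hb, mul_zero, mul_zero, sub_zero, zero_sub, neg_nonpos]
  exact integral_nonneg hab fun x _ => by
    have := hg'_nonneg (v x); nlinarith [sq_nonneg (v' x)]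

lemma integral_neg_mul_rhoRpowDeriv_mul_le {τ p lamb : ℝ} {v l : ℝ → ℝ} (hab : a ≤ b)
    (hτ : 0 < τ) (hp : 0 ≤ p) (hlamb : 0 ≤ lamb) (hv : ContinuousOn v (Icc a b))
    (hl : ContinuousOn l (Icc a b)) (hl_ge : ∀ x ∈ Icc a b, lamb ≤ l x) :
    ∫ x in a..b, -(l x * (rhoRpowDeriv τ p (v x) * v x))
      ≤ -lamb * p * (∫ x in a..b, rho τ (v x) ^ p)
        + 3 / 8 * τ * p * ∫ x in a..b, l x * rho τ (v x) ^ (p - 1) := by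
  have hint {f : ℝ → ℝ} (hf : ContinuousOn f (Icc a b)) : IntervalIntegrable f volume a b :=
    hf.intervalIntegrable_of_Icc hab
  have cρ (e : ℝ) : ContinuousOn (fun x => rho τ (v x) ^ e) (Icc a b) :=
    (continuous_rho_rpow hτ e).comp_continuousOn hv
  calc ∫ x in a..b, -(l x * (rhoRpowDeriv τ p (v x) * v x))
      ≤ ∫ x in a..b, (-lamb * p * rho τ (v x) ^ p
          + 3 / 8 * τ * p * (l x * rho τ (v x) ^ (p - 1))) :=
        integral_mono_on hab
          (hint (hl.mul (((continuous_rhoRpowDeriv hτ p).comp_continuousOn hv).mul hv)).neg)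
          (hint ((continuousOn_const.mul (cρ p)).add (continuousOn_const.mul (hl.mul (cρ _)))))
          fun x hx => neg_mul_rhoRpowDeriv_mul_le hτ hp hlamb (hl_ge x hx) (v x)
    _ = _ := by
      rw [intervalIntegral.integral_add, intervalIntegral.integral_const_mul,
        intervalIntegral.integral_const_mul]
      · exact hint (continuousOn_const.mul (cρ p))
      · exact hint (continuousOn_const.mul (hl.mul (cρ _)))

end IntervalIntegral

namespace TargetSol

variable {lam u ut ux uxx : ℝ → ℝ → ℝ} {τ t : ℝ}

lemma hasDerivAt_integral_rho_rpow (hu : TargetSol lam u ut ux uxx) (hτ : 0 < τ) (p : ℝ)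
    (ht : 0 < t) :
    HasDerivAt (fun s => ∫ x in (0:ℝ)..1, rho τ (u x s) ^ p)
      (∫ x in (0:ℝ)..1, rhoRpowDeriv τ p (u x t) * ut x t) t :=
  hasDerivAt_intervalIntegral_of_continuousOn zero_le_one isOpen_Ioi ht
    (fun s hs => (continuous_rho_rpow hτ p).comp_continuousOn
      (hu.cont.uncurry_right s (mem_Ici.2 (le_of_lt hs))))
    (((continuous_rhoRpowDeriv hτ p).comp_continuousOn
      (hu.cont.mono (prod_mono_right Ioi_subset_Ici_self))).mul hu.cont_ut)
    fun x hx s hs => (hasDerivAt_rho_rpow hτ p _).comp s (hu.deriv_t x hx s hs)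

lemma integral_rhoRpowDeriv_mul_uxx_nonpos (hu : TargetSol lam u ut ux uxx) (hτ : 0 < τ)
    {p : ℝ} (hp : 1 ≤ p) (ht : 0 < t) :
    ∫ x in (0:ℝ)..1, rhoRpowDeriv τ p (u x t) * uxx x t ≤ 0 :=
  integral_comp_mul_deriv2_nonpos zero_le_one (hasDerivAt_rhoRpowDeriv hτ p)
    (continuous_rhoRpowDeriv2 hτ p) (rhoRpowDeriv2_nonneg hτ hp)
    (fun x hx => hu.deriv_x x hx t ht) (fun x hx => hu.deriv_xx x hx t ht)
    (hu.cont_uxx.uncurry_right t ht) (hu.bc0 t ht) (hu.bc1 t ht)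

lemma integral_rhoRpowDeriv_mul_ut (hu : TargetSol lam u ut ux uxx) (hτ : 0 < τ) (p : ℝ)
    (hlam : ContinuousOn (fun q : ℝ × ℝ => lam q.1 q.2) (Icc 0 1 ×ˢ Ici 0)) (ht : 0 < t) :
    ∫ x in (0:ℝ)..1, rhoRpowDeriv τ p (u x t) * ut x t
      = (∫ x in (0:ℝ)..1, rhoRpowDeriv τ p (u x t) * uxx x t)
        + ∫ x in (0:ℝ)..1, -(lam x t * (rhoRpowDeriv τ p (u x t) * u x t)) := by
  have cu : ContinuousOn (u · t) (Icc 0 1) := hu.cont.uncurry_right t (mem_Ici.2 ht.le)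
  have cg := (continuous_rhoRpowDeriv hτ p).comp_continuousOn cu
  rw [← intervalIntegral.integral_add]
  · refine intervalIntegral.integral_congr_Ioo_of_le zero_le_one fun x hx => ?_
    simp only [hu.pde x hx t ht]
    ring
  · exact (cg.mul (hu.cont_uxx.uncurry_right t ht)).intervalIntegrable_of_Icc zero_le_one
  · exact ((hlam.uncurry_right t (mem_Ici.2 ht.le)).mul (cg.mul cu)).neg.intervalIntegrable_of_Icc
      zero_le_one

end TargetSol

theorem stmt5 (lam u ut ux uxx : ℝ → ℝ → ℝ) (lamb : ℝ) (hlamb : 0 < lamb)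
    (hlam_cont : ContinuousOn (fun q : ℝ × ℝ => lam q.1 q.2) (Set.Icc 0 1 ×ˢ Set.Ici 0))
    (hlam_ge : ∀ x ∈ Set.Icc (0:ℝ) 1, ∀ t ∈ Set.Ici (0:ℝ), lamb ≤ lam x t)
    (hu : TargetSol lam u ut ux uxx)
    (τ : ℝ) (hτ : 0 < τ) (p : ℝ) (hp : 1 ≤ p) (t : ℝ) (ht : 0 < t) :
    ∃ d : ℝ,
      HasDerivAt (fun s => ∫ x in (0:ℝ)..1, rho τ (u x s) ^ p) d t ∧
      d ≤ -lamb * p * (∫ x in (0:ℝ)..1, rho τ (u x t) ^ p)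
          + 3 / 8 * τ * p * ∫ x in (0:ℝ)..1, lam x t * rho τ (u x t) ^ (p - 1) := by
  refine ⟨_, hu.hasDerivAt_integral_rho_rpow hτ p ht, ?_⟩
  rw [hu.integral_rhoRpowDeriv_mul_ut hτ p hlam_cont ht]
  have hdiffusion := hu.integral_rhoRpowDeriv_mul_uxx_nonpos hτ hp ht
  have hreaction := integral_neg_mul_rhoRpowDeriv_mul_le zero_le_one hτ (by linarith : 0 ≤ p)
    hlamb.le (hu.cont.uncurry_right t (mem_Ici.2 ht.le))
    (hlam_cont.uncurry_right t (mem_Ici.2 ht.le))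
    fun x hx => hlam_ge x hx t (mem_Ici.2 ht.le)
  linarith
end
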